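/- Let R ∈ ℝ^{n×n} have all entries in (0,1], let (x*,y*) be a Nash equilibrium of the associated zero-sum game, let (x,y) be a fully mixed profile, let x̂ and ŷ be arbitrary probability vectors, and let η ∈ (0, 1/2]. Define the multiplicative update x'_i = x_i e^{η(Rŷ)_i} / Σ_j x_j e^{η(Rŷ)_j} and y'_j = y_j e^{−η(Rᵀx̂)_j} / Σ_i y_i e^{−η(Rᵀx̂)_i}, and the deviation gains ε₁ = x̂ᵀRy − xᵀRy and ε₂ = xᵀRy − xᵀRŷ. Then D_KL((x*,y*)||(x',y')) − D_KL((x*,y*)||(x,y)) ≤ −η(ε₁ + ε₂) + 4η². -/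
import Mathlib


open Finset Real Filter

/-- A probability vector (mixed strategy) on `Fin n`. -/
def IsProbVec {n : ℕ} (x : Fin n → ℝ) : Prop := (∀ i, 0 ≤ x i) ∧ ∑ i, x i = 1

/-- A fully mixed strategy: all coordinates strictly positive. -/
def FullyMixed {n : ℕ} (x : Fin n → ℝ) : Prop := ∀ i, 0 < x i

/-- Expected payoff of the row player, `xᵀ R y`. -/
def payoff {n : ℕ} (R : Matrix (Fin n) (Fin n) ℝ) (x y : Fin n → ℝ) : ℝ :=
  ∑ i, ∑ j, x i * R i j * y j

/-- `e_iᵀ R y`, the payoff of pure row strategy `i` against `y`. -/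
def rowPayoff {n : ℕ} (R : Matrix (Fin n) (Fin n) ℝ) (y : Fin n → ℝ) (i : Fin n) : ℝ :=
  ∑ j, R i j * y j

/-- `xᵀ R e_j`, the (row player's) payoff when the column player plays pure strategy `j`. -/
def colPayoff {n : ℕ} (R : Matrix (Fin n) (Fin n) ℝ) (x : Fin n → ℝ) (j : Fin n) : ℝ :=
  ∑ i, x i * R i j

/-- `(x, y)` is a Nash equilibrium of the zero-sum game with payoff matrix `R`. -/
def IsNash {n : ℕ} (R : Matrix (Fin n) (Fin n) ℝ) (x y : Fin n → ℝ) : Prop :=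
  IsProbVec x ∧ IsProbVec y ∧ (∀ i, rowPayoff R y i ≤ payoff R x y) ∧
    (∀ j, payoff R x y ≤ colPayoff R x j)

/-- `(x, y)` is an `ε`-Nash equilibrium. -/
def IsEpsNash {n : ℕ} (R : Matrix (Fin n) (Fin n) ℝ) (x y : Fin n → ℝ) (ε : ℝ) : Prop :=
  (∀ i, rowPayoff R y i ≤ payoff R x y + ε) ∧ (∀ j, payoff R x y - ε ≤ colPayoff R x j)

/-- Intermediate (IBR) strategy of the row player:
`x̂ᵢ = xᵢ e^{ξ (Ry)ᵢ} / ∑ⱼ xⱼ e^{ξ (Ry)ⱼ}`. -/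
noncomputable def brX {n : ℕ} (ξ : ℝ) (R : Matrix (Fin n) (Fin n) ℝ) (x y : Fin n → ℝ) :
    Fin n → ℝ :=
  fun i => x i * Real.exp (ξ * rowPayoff R y i) / ∑ j, x j * Real.exp (ξ * rowPayoff R y j)

/-- Intermediate (IBR) strategy of the column player:
`ŷⱼ = yⱼ e^{-ξ (Rᵀx)ⱼ} / ∑ₖ yₖ e^{-ξ (Rᵀx)ₖ}`. -/
noncomputable def brY {n : ℕ} (ξ : ℝ) (R : Matrix (Fin n) (Fin n) ℝ) (x y : Fin n → ℝ) :
    Fin n → ℝ :=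
  fun j => y j * Real.exp (-(ξ * colPayoff R x j)) / ∑ k, y k * Real.exp (-(ξ * colPayoff R x k))

/-- Multiplicative-weights update of the row player against the (intermediate) strategy `yh`. -/
noncomputable def mwuX {n : ℕ} (η : ℝ) (R : Matrix (Fin n) (Fin n) ℝ) (x yh : Fin n → ℝ) :
    Fin n → ℝ :=
  fun i => x i * Real.exp (η * rowPayoff R yh i) / ∑ j, x j * Real.exp (η * rowPayoff R yh j)

/-- Multiplicative-weights update of the column player against the (intermediate) strategy `xh`. -/
noncomputable def mwuY {n : ℕ} (η : ℝ) (R : Matrix (Fin n) (Fin n) ℝ) (y xh : Fin n → ℝ) :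
    Fin n → ℝ :=
  fun j => y j * Real.exp (-(η * colPayoff R xh j)) / ∑ k, y k * Real.exp (-(η * colPayoff R xh k))

/-- One full step of the FLBR-MWU dynamics with update rate `η` and intermediate rate `ξ`. -/
noncomputable def flbrStep {n : ℕ} (η ξ : ℝ) (R : Matrix (Fin n) (Fin n) ℝ)
    (p : (Fin n → ℝ) × (Fin n → ℝ)) : (Fin n → ℝ) × (Fin n → ℝ) :=
  (mwuX η R p.1 (brY ξ R p.1 p.2), mwuY η R p.2 (brX ξ R p.1 p.2))

/-- Kullback–Leibler divergence `∑ᵢ xsᵢ ln(xsᵢ / xᵢ)` (with the convention `0 · ln 0 = 0`). -/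
noncomputable def klDiv {n : ℕ} (xs x : Fin n → ℝ) : ℝ := ∑ i, xs i * Real.log (xs i / x i)

/-- KL divergence of the profile `(x, y)` from `(xs, ys)`. -/
noncomputable def klProfile {n : ℕ} (xs ys x y : Fin n → ℝ) : ℝ := klDiv xs x + klDiv ys y

lemma exp_le_quad {z : ℝ} (hz : |z| ≤ 1) : Real.exp z ≤ 1 + z + z ^ 2 := by
  have h := Real.exp_bound hz (n := 2) (by norm_num)
  have h2 : ∑ m ∈ Finset.range 2, z ^ m / m.factorial = 1 + z := by
    simp [Finset.sum_range_succ]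
  rw [h2] at h
  have h3 := (abs_sub_le_iff.1 h).1
  have hz2 : |z| ^ 2 = z ^ 2 := sq_abs z
  norm_num [Nat.factorial] at h3
  nlinarith [sq_nonneg z]

lemma payoff_eq_row {n : ℕ} (R : Matrix (Fin n) (Fin n) ℝ) (x y : Fin n → ℝ) :
    payoff R x y = ∑ i, x i * rowPayoff R y i := by
  unfold payoff rowPayoff
  simp [Finset.mul_sum, mul_assoc]

lemma payoff_eq_col {n : ℕ} (R : Matrix (Fin n) (Fin n) ℝ) (x y : Fin n → ℝ) :
    payoff R x y = ∑ j, y j * colPayoff R x j := by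
  unfold payoff colPayoff
  rw [Finset.sum_comm]
  simp only [Finset.mul_sum]
  exact Finset.sum_congr rfl fun j _ => Finset.sum_congr rfl fun i _ => by ring

lemma klDiv_update {n : ℕ} (xs x w : Fin n → ℝ) (hxs : IsProbVec xs)
    (hxm : FullyMixed x) (hw : ∀ i, 0 < w i)
    (hZ : 0 < ∑ j, x j * w j) :
    klDiv xs (fun i => x i * w i / ∑ j, x j * w j) - klDiv xs x
      = Real.log (∑ j, x j * w j) - ∑ i, xs i * Real.log (w i) := by
  set Z := ∑ j, x j * w j with hZdef
  unfold klDiv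
  rw [← Finset.sum_sub_distrib]
  have key : ∀ i, xs i * Real.log (xs i / (x i * w i / Z)) - xs i * Real.log (xs i / x i)
      = xs i * Real.log Z - xs i * Real.log (w i) := by
    intro i
    rcases eq_or_lt_of_le (hxs.1 i) with h | h
    · simp [← h]
    · have hxi := hxm i
      have hwi := hw i
      rw [Real.log_div h.ne' (by positivity), Real.log_div h.ne' hxi.ne',
        Real.log_div (by positivity) hZ.ne', Real.log_mul hxi.ne' hwi.ne']
      ring
  rw [Finset.sum_congr rfl fun i _ => key i, Finset.sum_sub_distrib, ← Finset.sum_mul, hxs.2,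
    one_mul]

/-- For any probability vectors `xh, ŷh` and `η ∈ (0, 1/2]`, the multiplicative
update decreases the KL divergence from a Nash equilibrium `(xs, ys)` by at least
`η(ε₁ + ε₂) − 4η²`, where `ε₁ = x̂ᵀRy − xᵀRy` and `ε₂ = xᵀRy − xᵀRŷ`. -/
theorem mwu_kl_diff_le {n : ℕ} (R : Matrix (Fin n) (Fin n) ℝ)
    (hR : ∀ i j, 0 < R i j ∧ R i j ≤ 1)
    (xs ys : Fin n → ℝ) (hNash : IsNash R xs ys)
    (x y : Fin n → ℝ) (hx : IsProbVec x) (hy : IsProbVec y)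
    (hxm : FullyMixed x) (hym : FullyMixed y)
    (xh yh : Fin n → ℝ) (hxh : IsProbVec xh) (hyh : IsProbVec yh)
    (η : ℝ) (hη : η ∈ Set.Ioc (0 : ℝ) (1 / 2)) :
    klProfile xs ys (mwuX η R x yh) (mwuY η R y xh) - klProfile xs ys x y
      ≤ -(η * ((payoff R xh y - payoff R x y) + (payoff R x y - payoff R x yh)))
        + 4 * η ^ 2 := by
  obtain ⟨hη0, hη2⟩ := hη
  have hne : (Finset.univ : Finset (Fin n)).Nonempty := by
    rcases (Finset.univ : Finset (Fin n)).eq_empty_or_nonempty with h | h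
    · exfalso; have h2 := hx.2; rw [h] at h2; simp at h2
    · exact h
  set a : Fin n → ℝ := fun i => rowPayoff R yh i with ha
  set b : Fin n → ℝ := fun j => colPayoff R xh j with hb
  have ha0 : ∀ i, 0 ≤ a i := fun i =>
    Finset.sum_nonneg fun j _ => mul_nonneg (hR i j).1.le (hyh.1 j)
  have ha1 : ∀ i, a i ≤ 1 := by
    intro i
    calc a i ≤ ∑ j, yh j :=
          Finset.sum_le_sum fun j _ => mul_le_of_le_one_left (hyh.1 j) (hR i j).2
      _ = 1 := hyh.2
  have hb0 : ∀ j, 0 ≤ b j := fun j =>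
    Finset.sum_nonneg fun i _ => mul_nonneg (hxh.1 i) (hR i j).1.le
  have hb1 : ∀ j, b j ≤ 1 := by
    intro j
    calc b j ≤ ∑ i, xh i :=
          Finset.sum_le_sum fun i _ => mul_le_of_le_one_right (hxh.1 i) (hR i j).2
      _ = 1 := hxh.2
  set Zx := ∑ j, x j * Real.exp (η * a j) with hZx
  have hZxpos : 0 < Zx := Finset.sum_pos (fun j _ => mul_pos (hxm j) (Real.exp_pos _)) hne
  set Zy := ∑ k, y k * Real.exp (-(η * b k)) with hZy
  have hZypos : 0 < Zy := Finset.sum_pos (fun k _ => mul_pos (hym k) (Real.exp_pos _)) hne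
  have hS : payoff R x yh = ∑ i, x i * a i := payoff_eq_row R x yh
  have hT : payoff R xh y = ∑ j, y j * b j := payoff_eq_col R xh y
  have hZxle : Zx ≤ 1 + η * payoff R x yh + η ^ 2 := by
    have step : ∀ j, x j * Real.exp (η * a j) ≤ x j * (1 + η * a j + η ^ 2) := by
      intro j
      have h1 : |η * a j| ≤ 1 := by
        rw [abs_of_nonneg (mul_nonneg hη0.le (ha0 j))]
        nlinarith [ha0 j, ha1 j]
      have h2 := exp_le_quad h1
      have haa : a j * a j ≤ 1 := by nlinarith [ha0 j, ha1 j]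
      have h3 : (η * a j) ^ 2 ≤ η ^ 2 := by nlinarith [sq_nonneg η, haa]
      exact mul_le_mul_of_nonneg_left (h2.trans (by linarith)) (hxm j).le
    calc Zx ≤ ∑ j, x j * (1 + η * a j + η ^ 2) := Finset.sum_le_sum fun j _ => step j
      _ = (∑ j, x j) + η * (∑ j, x j * a j) + η ^ 2 * (∑ j, x j) := by
          rw [Finset.mul_sum, Finset.mul_sum, ← Finset.sum_add_distrib,
            ← Finset.sum_add_distrib]
          exact Finset.sum_congr rfl fun j _ => by ring
      _ = 1 + η * payoff R x yh + η ^ 2 := by rw [hx.2, ← hS]; ring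
  have hZyle : Zy ≤ 1 - η * payoff R xh y + η ^ 2 := by
    have step : ∀ k, y k * Real.exp (-(η * b k)) ≤ y k * (1 - η * b k + η ^ 2) := by
      intro k
      have h1 : |(-(η * b k))| ≤ 1 := by
        rw [abs_neg, abs_of_nonneg (mul_nonneg hη0.le (hb0 k))]
        nlinarith [hb0 k, hb1 k]
      have h2 := exp_le_quad h1
      have hbb : b k * b k ≤ 1 := by nlinarith [hb0 k, hb1 k]
      have h3 : (-(η * b k)) ^ 2 ≤ η ^ 2 := by nlinarith [sq_nonneg η, hbb]
      exact mul_le_mul_of_nonneg_left (h2.trans (by linarith)) (hym k).le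
    calc Zy ≤ ∑ k, y k * (1 - η * b k + η ^ 2) := Finset.sum_le_sum fun k _ => step k
      _ = (∑ k, y k) - η * (∑ k, y k * b k) + η ^ 2 * (∑ k, y k) := by
          rw [Finset.mul_sum, Finset.mul_sum, ← Finset.sum_sub_distrib,
            ← Finset.sum_add_distrib]
          exact Finset.sum_congr rfl fun k _ => by ring
      _ = 1 - η * payoff R xh y + η ^ 2 := by rw [hy.2, ← hT]; ring
  have hlogZx : Real.log Zx ≤ η * payoff R x yh + η ^ 2 := by
    have := Real.log_le_sub_one_of_pos hZxpos
    linarith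
  have hlogZy : Real.log Zy ≤ -(η * payoff R xh y) + η ^ 2 := by
    have := Real.log_le_sub_one_of_pos hZypos
    linarith
  have hKLx : klDiv xs (mwuX η R x yh) - klDiv xs x
      = Real.log Zx - η * payoff R xs yh := by
    have hupd := klDiv_update xs x (fun i => Real.exp (η * a i)) hNash.1 hxm
      (fun i => Real.exp_pos _) hZxpos
    have e1 : ∑ i, xs i * Real.log (Real.exp (η * a i)) = η * payoff R xs yh := by
      rw [payoff_eq_row R xs yh]
      simp only [Real.log_exp, Finset.mul_sum]
      exact Finset.sum_congr rfl fun i _ => by ring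
    rw [show mwuX η R x yh
        = fun i => x i * Real.exp (η * a i) / ∑ j, x j * Real.exp (η * a j) from rfl,
      hupd, e1]
  have hKLy : klDiv ys (mwuY η R y xh) - klDiv ys y
      = Real.log Zy + η * payoff R xh ys := by
    have hupd := klDiv_update ys y (fun k => Real.exp (-(η * b k))) hNash.2.1 hym
      (fun k => Real.exp_pos _) hZypos
    have e1 : ∑ k, ys k * Real.log (Real.exp (-(η * b k))) = -(η * payoff R xh ys) := by
      rw [payoff_eq_col R xh ys]
      simp only [Real.log_exp, Finset.mul_sum, ← Finset.sum_neg_distrib]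
      exact Finset.sum_congr rfl fun k _ => by ring
    rw [show mwuY η R y xh
        = fun k => y k * Real.exp (-(η * b k)) / ∑ j, y j * Real.exp (-(η * b j)) from rfl,
      hupd, e1]
    ring
  obtain ⟨hxsP, hysP, hrow, hcol⟩ := hNash
  have hv1 : payoff R xs ys ≤ payoff R xs yh := by
    rw [payoff_eq_col R xs yh]
    calc payoff R xs ys = ∑ j, yh j * payoff R xs ys := by
          rw [← Finset.sum_mul, hyh.2, one_mul]
      _ ≤ ∑ j, yh j * colPayoff R xs j :=
          Finset.sum_le_sum fun j _ => mul_le_mul_of_nonneg_left (hcol j) (hyh.1 j)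
  have hv2 : payoff R xh ys ≤ payoff R xs ys := by
    rw [payoff_eq_row R xh ys]
    calc ∑ i, xh i * rowPayoff R ys i ≤ ∑ i, xh i * payoff R xs ys :=
          Finset.sum_le_sum fun i _ => mul_le_mul_of_nonneg_left (hrow i) (hxh.1 i)
      _ = payoff R xs ys := by rw [← Finset.sum_mul, hxh.2, one_mul]
  have hfin : klProfile xs ys (mwuX η R x yh) (mwuY η R y xh) - klProfile xs ys x y
      = (klDiv xs (mwuX η R x yh) - klDiv xs x) + (klDiv ys (mwuY η R y xh) - klDiv ys y) := by
    unfold klProfile; ring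
  rw [hfin, hKLx, hKLy]
  have hmono : η * payoff R xh ys ≤ η * payoff R xs yh :=
    mul_le_mul_of_nonneg_left (hv2.trans hv1) hη0.le
  nlinarith [sq_nonneg η]
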